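/- arXiv:2306.11078 — 4 statements merged into one kernel-verified Lean document; each statement's English description precedes it below -/
import Mathlib

section
/- Let 𝒳, 𝒳' be standard Borel (Polish) spaces, let f : 𝒳 → 𝒳' be continuous and injective, and let X, Y be random variables with X taking values in 𝒳. Then I(f(X); Y) ≥ I(X; Y); combined with the data-processing inequality this yields I(f(X); Y) = I(X; Y). -/
open MeasureTheory

def IsFinitePartition {α : Type*} [MeasurableSpace α] {n : ℕ} (E : Fin n → Set α) : Prop :=
  (∀ i, MeasurableSet (E i)) ∧ Pairwise (fun i j => Disjoint (E i) (E j)) ∧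
    (⋃ i, E i) = Set.univ

/-- The sum `Σ_{i,j} P_{XY}(E_i × F_j) log( P_{XY}(E_i × F_j) / (P_X(E_i) P_Y(F_j)) )`
associated to a pair of finite partitions. -/
noncomputable def partitionSum {X Y : Type*} [MeasurableSpace X] [MeasurableSpace Y]
    (μ : Measure (X × Y)) {n m : ℕ} (E : Fin n → Set X) (F : Fin m → Set Y) : ℝ :=
  ∑ i : Fin n, ∑ j : Fin m,
    (μ (E i ×ˢ F j)).toReal *
      Real.log ((μ (E i ×ˢ F j)).toReal /
        (((μ.map Prod.fst) (E i)).toReal * ((μ.map Prod.snd) (F j)).toReal))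

noncomputable def mutualInfo {X Y : Type*} [MeasurableSpace X] [MeasurableSpace Y]
    (μ : Measure (X × Y)) : ENNReal :=
  ⨆ (n : ℕ) (m : ℕ) (E : Fin n → Set X) (F : Fin m → Set Y)
    (_ : IsFinitePartition E) (_ : IsFinitePartition F),
      ENNReal.ofReal (partitionSum μ E F)

/-!
Pulling partitions of `𝒳'` back along `f` gives `I(f(X); Y) ≤ I(X; Y)`. Conversely, by the
Lusin–Souslin theorem a continuous injection out of a Polish space is a measurable embedding,
so a partition `{Eᵢ}` of `𝒳` yields the measurable partition `{f(Eᵢ)} ∪ {(range f)ᶜ}` of `𝒳'`.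
Its cells pull back to the `Eᵢ` and to `∅`, so its partition sum for `(f(X), Y)` equals that
of `{Eᵢ}` for `(X, Y)`.
-/

section

variable {α α' β : Type*} [MeasurableSpace α] [MeasurableSpace α'] [MeasurableSpace β]

namespace IsFinitePartition

variable {n : ℕ} {E : Fin n → Set α}

theorem preimage (hE : IsFinitePartition E) {f : α' → α} (hf : Measurable f) :
    IsFinitePartition fun i => f ⁻¹' E i :=
  ⟨fun i => hf (hE.1 i), fun _ _ hij => (hE.2.1 hij).preimage f, by
    rw [← Set.preimage_iUnion, hE.2.2, Set.preimage_univ]⟩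

theorem snoc_image_compl_range (hE : IsFinitePartition E) {f : α → α'}
    (hf : MeasurableEmbedding f) :
    IsFinitePartition (Fin.snoc (fun i => f '' E i) (Set.range f)ᶜ : Fin (n + 1) → Set α') := by
  have hdisj : ∀ i, Disjoint (f '' E i) (Set.range f)ᶜ := fun i =>
    Set.disjoint_compl_right_iff_subset.2 (Set.image_subset_range f _)
  refine ⟨fun i => ?_, fun i j hij => ?_, ?_⟩
  · induction i using Fin.lastCases with
    | last => simpa using hf.measurableSet_range.compl
    | cast i => simpa using hf.measurableSet_image.2 (hE.1 i)
  · induction i using Fin.lastCases with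
    | last =>
      induction j using Fin.lastCases with
      | last => exact absurd rfl hij
      | cast j => simpa using (hdisj j).symm
    | cast i =>
      induction j using Fin.lastCases with
      | last => simpa using hdisj i
      | cast j =>
        simpa using Set.disjoint_image_of_injective hf.injective
          (hE.2.1 fun h => hij (congrArg Fin.castSucc h))
  · rw [Set.iUnion_snoc, ← Set.image_iUnion, hE.2.2, Set.image_univ,
      Set.union_compl_self]

end IsFinitePartition

theorem le_mutualInfo (μ : Measure (α × β)) {n m : ℕ} {E : Fin n → Set α}
    {F : Fin m → Set β} (hE : IsFinitePartition E) (hF : IsFinitePartition F) :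
    ENNReal.ofReal (partitionSum μ E F) ≤ mutualInfo μ :=
  le_iSup_of_le n <| le_iSup_of_le m <| le_iSup_of_le E <| le_iSup_of_le F <|
    le_iSup₂_of_le hE hF le_rfl

theorem mutualInfo_le {μ : Measure (α × β)} {c : ENNReal}
    (h : ∀ (n m : ℕ) (E : Fin n → Set α) (F : Fin m → Set β),
      IsFinitePartition E → IsFinitePartition F → ENNReal.ofReal (partitionSum μ E F) ≤ c) :
    mutualInfo μ ≤ c := by
  simpa only [mutualInfo, iSup_le_iff] using h

theorem partitionSum_snoc_empty (μ : Measure (α × β)) {n m : ℕ} (E : Fin n → Set α)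
    (F : Fin m → Set β) :
    partitionSum μ (Fin.snoc E ∅ : Fin (n + 1) → Set α) F = partitionSum μ E F := by
  simp [partitionSum, Fin.sum_univ_castSucc]

variable {f : α → α'} (μ : Measure (α × β))

theorem map_prodMap_id_apply_prod (hf : Measurable f) {A : Set α'} {B : Set β}
    (hA : MeasurableSet A) (hB : MeasurableSet B) :
    μ.map (Prod.map f id) (A ×ˢ B) = μ ((f ⁻¹' A) ×ˢ B) :=
  Measure.map_apply (hf.prodMap measurable_id) (hA.prod hB)

theorem fst_map_prodMap_id (hf : Measurable f) :
    (μ.map (Prod.map f id)).map Prod.fst = (μ.map Prod.fst).map f := by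
  rw [Measure.map_map measurable_fst (hf.prodMap measurable_id),
    Measure.map_map hf measurable_fst]
  rfl

theorem snd_map_prodMap_id (hf : Measurable f) :
    (μ.map (Prod.map f id)).map Prod.snd = μ.map Prod.snd := by
  rw [Measure.map_map measurable_snd (hf.prodMap measurable_id)]
  rfl

theorem partitionSum_map_prodMap_id (hf : Measurable f) {n m : ℕ} {E : Fin n → Set α'}
    {F : Fin m → Set β} (hE : ∀ i, MeasurableSet (E i)) (hF : ∀ j, MeasurableSet (F j)) :
    partitionSum (μ.map (Prod.map f id)) E F = partitionSum μ (fun i => f ⁻¹' E i) F := by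
  simp only [partitionSum, fst_map_prodMap_id μ hf, snd_map_prodMap_id μ hf,
    map_prodMap_id_apply_prod μ hf (hE _) (hF _), Measure.map_apply hf (hE _)]

theorem mutualInfo_map_prodMap_id_le (hf : Measurable f) :
    mutualInfo (μ.map (Prod.map f id)) ≤ mutualInfo μ :=
  mutualInfo_le fun _ _ _ _ hE hF => by
    rw [partitionSum_map_prodMap_id μ hf hE.1 hF.1]
    exact le_mutualInfo μ (hE.preimage hf) hF

theorem mutualInfo_map_prodMap_id (hf : MeasurableEmbedding f) :
    mutualInfo (μ.map (Prod.map f id)) = mutualInfo μ := by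
  refine le_antisymm (mutualInfo_map_prodMap_id_le μ hf.measurable)
    (mutualInfo_le fun n _ E F hE hF => ?_)
  have hE' := hE.snoc_image_compl_range hf
  have hpre :
      (fun i => f ⁻¹' (Fin.snoc (fun i => f '' E i) (Set.range f)ᶜ : Fin (n + 1) → Set α') i) =
        Fin.snoc E ∅ := by
    rw [← Function.comp_def, Fin.comp_snoc]
    simp [Function.comp_def, Set.preimage_image_eq _ hf.injective]
  calc ENNReal.ofReal (partitionSum μ E F)
      = ENNReal.ofReal (partitionSum (μ.map (Prod.map f id)) _ F) := by
        rw [partitionSum_map_prodMap_id μ hf.measurable hE'.1 hF.1, hpre,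
          partitionSum_snoc_empty]
    _ ≤ mutualInfo (μ.map (Prod.map f id)) := le_mutualInfo _ hE' hF

end

theorem mutualInfo_comp_continuous_injective_ge_and_eq_general
    {Ω 𝒳 𝒳' 𝒴 : Type*} [MeasurableSpace Ω]
    [TopologicalSpace 𝒳] [PolishSpace 𝒳] [MeasurableSpace 𝒳] [BorelSpace 𝒳]
    [TopologicalSpace 𝒳'] [PolishSpace 𝒳'] [MeasurableSpace 𝒳'] [BorelSpace 𝒳']
    [MeasurableSpace 𝒴]
    (P : Measure Ω)
    (X : Ω → 𝒳) (Y : Ω → 𝒴) (hX : Measurable X) (hY : Measurable Y)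
    (f : 𝒳 → 𝒳') (hf : Continuous f) (hfinj : Function.Injective f) :
    mutualInfo (P.map (fun ω => (f (X ω), Y ω))) ≥
        mutualInfo (P.map (fun ω => (X ω, Y ω))) ∧
      mutualInfo (P.map (fun ω => (f (X ω), Y ω))) =
        mutualInfo (P.map (fun ω => (X ω, Y ω))) := by
  have hemb : MeasurableEmbedding f := hf.measurableEmbedding hfinj
  have hmap : P.map (fun ω => (f (X ω), Y ω)) =
      (P.map fun ω => (X ω, Y ω)).map (Prod.map f id) := by
    rw [Measure.map_map (hemb.measurable.prodMap measurable_id) (hX.prodMk hY)]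
    rfl
  rw [hmap, mutualInfo_map_prodMap_id _ hemb]
  exact ⟨le_rfl, rfl⟩

/-- For a continuous injective map `f` between standard Borel (Polish) spaces,
`I(f(X); Y) ≥ I(X; Y)`; together with the data-processing inequality this gives
`I(f(X); Y) = I(X; Y)`. -/
theorem mutualInfo_comp_continuous_injective_ge_and_eq
    {Ω 𝒳 𝒳' 𝒴 : Type*} [MeasurableSpace Ω]
    [TopologicalSpace 𝒳] [PolishSpace 𝒳] [MeasurableSpace 𝒳] [BorelSpace 𝒳]
    [TopologicalSpace 𝒳'] [PolishSpace 𝒳'] [MeasurableSpace 𝒳'] [BorelSpace 𝒳']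
    [MeasurableSpace 𝒴]
    (P : Measure Ω) [IsProbabilityMeasure P]
    (X : Ω → 𝒳) (Y : Ω → 𝒴) (hX : Measurable X) (hY : Measurable Y)
    (f : 𝒳 → 𝒳') (hf : Continuous f) (hfinj : Function.Injective f) :
    mutualInfo (P.map (fun ω => (f (X ω), Y ω))) ≥
        mutualInfo (P.map (fun ω => (X ω, Y ω))) ∧
      mutualInfo (P.map (fun ω => (f (X ω), Y ω))) =
        mutualInfo (P.map (fun ω => (X ω, Y ω))) :=
  mutualInfo_comp_continuous_injective_ge_and_eq_general P X Y hX hY f hf hfinj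
end

section
/- Let P be a probability measure on ℝⁿ with a smooth probability density function p (with respect to Lebesgue measure) that factorizes as p(x) = u(‖x‖²) for some smooth function u : ℝ → ℝ. Then every spiral f : ℝⁿ → ℝⁿ preserves P, i.e., the pushforward measure satisfies f_#P = P. -/
open Matrix MeasureTheory

/-- The spiral associated to a smooth path `γ : ℝ → O(n)` of orthogonal matrices:
`f(x) = γ(‖x‖²) x`. -/
noncomputable def spiral {n : ℕ} (γ : ℝ → Matrix (Fin n) (Fin n) ℝ)
    (x : EuclideanSpace ℝ (Fin n)) : EuclideanSpace ℝ (Fin n) :=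
  (EuclideanSpace.equiv (Fin n) ℝ).symm ((γ (‖x‖ ^ 2)).mulVec (EuclideanSpace.equiv (Fin n) ℝ x))

section Aux

variable {n : ℕ}



noncomputable def gderiv (γ : ℝ → Matrix (Fin n) (Fin n) ℝ) (t : ℝ) : Matrix (Fin n) (Fin n) ℝ :=
  Matrix.of fun i j => deriv (fun s => γ s i j) t

noncomputable def Fmap (γ : ℝ → Matrix (Fin n) (Fin n) ℝ) (v : Fin n → ℝ) : Fin n → ℝ :=
  γ (v ⬝ᵥ v) *ᵥ v

noncomputable def Dmat (γ : ℝ → Matrix (Fin n) (Fin n) ℝ) (v : Fin n → ℝ) :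
    Matrix (Fin n) (Fin n) ℝ :=
  γ (v ⬝ᵥ v) + vecMulVec ((2:ℝ) • (gderiv γ (v ⬝ᵥ v) *ᵥ v)) v

theorem hasFDerivAt_Q (v : Fin n → ℝ) :
    HasFDerivAt (fun w : Fin n → ℝ => w ⬝ᵥ w)
      (∑ j, (v j • ContinuousLinearMap.proj j + v j • ContinuousLinearMap.proj j) :
        (Fin n → ℝ) →L[ℝ] ℝ) v := by
  have h : ∀ j ∈ Finset.univ, HasFDerivAt (fun w : Fin n → ℝ => w j * w j)
      ((v j • ContinuousLinearMap.proj j + v j • ContinuousLinearMap.proj j :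
        (Fin n → ℝ) →L[ℝ] ℝ)) v := fun j _ =>
    (hasFDerivAt_apply j v).mul (hasFDerivAt_apply j v)
  exact HasFDerivAt.fun_sum h

theorem hasFDerivAt_Fmap (γ : ℝ → Matrix (Fin n) (Fin n) ℝ)
    (hsmooth : ∀ i j, ContDiff ℝ (⊤ : ℕ∞) fun t => γ t i j) (v : Fin n → ℝ) :
    HasFDerivAt (Fmap γ) (LinearMap.toContinuousLinearMap (Matrix.toLin' (Dmat γ v))) v := by
  set t := v ⬝ᵥ v with ht
  set Qd : (Fin n → ℝ) →L[ℝ] ℝ :=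
    ∑ j, (v j • ContinuousLinearMap.proj j + v j • ContinuousLinearMap.proj j) with hQd
  have hQ : HasFDerivAt (fun w : Fin n → ℝ => w ⬝ᵥ w) Qd v := hasFDerivAt_Q v
  have hQdapp : ∀ h, Qd h = 2 * (v ⬝ᵥ h) := by
    intro h
    simp only [hQd, dotProduct, ContinuousLinearMap.sum_apply, ContinuousLinearMap.add_apply,
      ContinuousLinearMap.smul_apply, ContinuousLinearMap.proj_apply, smul_eq_mul,
      Finset.mul_sum]
    exact Finset.sum_congr rfl fun x _ => by ring
  apply hasFDerivAt_pi''
  intro i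
  have hterm : ∀ j ∈ Finset.univ, HasFDerivAt
      (fun w : Fin n → ℝ => γ (w ⬝ᵥ w) i j * w j)
      ((γ t i j • ContinuousLinearMap.proj j +
        v j • (gderiv γ t i j • Qd) : (Fin n → ℝ) →L[ℝ] ℝ)) v := by
    intro j _
    have hder : HasDerivAt (fun s => γ s i j) (gderiv γ t i j) t :=
      (((hsmooth i j).differentiable (by simp)) t).hasDerivAt
    have hc : HasFDerivAt (fun w : Fin n → ℝ => γ (w ⬝ᵥ w) i j)
        (gderiv γ t i j • Qd) v := hder.comp_hasFDerivAt (h₂ := fun s => γ s i j) v (by exact hQ)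
    exact hc.mul (hasFDerivAt_apply j v)
  have hsum := HasFDerivAt.fun_sum hterm
  have hfun : (fun w : Fin n → ℝ => ∑ j, γ (w ⬝ᵥ w) i j * w j) = fun w => Fmap γ w i := by
    funext w
    simp [Fmap, Matrix.mulVec, dotProduct]
  rw [hfun] at hsum
  convert hsum using 1
  ext h
  simp only [ContinuousLinearMap.coe_comp', Function.comp_apply,
    ContinuousLinearMap.proj_apply, LinearMap.coe_toContinuousLinearMap',
    Matrix.toLin'_apply, ContinuousLinearMap.sum_apply, ContinuousLinearMap.add_apply,
    ContinuousLinearMap.smul_apply, ContinuousLinearMap.proj_apply, smul_eq_mul]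
  rw [hQdapp]
  simp only [Dmat, Matrix.add_mulVec, Pi.add_apply]
  rw [Finset.sum_add_distrib]
  congr 1
  rw [← ht]
  simp only [Matrix.mulVec, dotProduct, vecMulVec_apply, Pi.smul_apply, smul_eq_mul]
  have l1 : ∑ j, (2 * ∑ k, gderiv γ t i k * v k) * v j * h j
      = (2 * ∑ k, gderiv γ t i k * v k) * ∑ j, v j * h j := by
    conv_rhs => rw [Finset.mul_sum]
    exact Finset.sum_congr rfl fun j _ => by ring
  have l2 : ∑ x, v x * (gderiv γ t i x * (2 * ∑ k, v k * h k))
      = (∑ x, gderiv γ t i x * v x) * (2 * ∑ k, v k * h k) := by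
    conv_rhs => rw [Finset.sum_mul]
    exact Finset.sum_congr rfl fun x _ => by ring
  rw [l1, l2]
  ring




theorem skew (γ : ℝ → Matrix (Fin n) (Fin n) ℝ)
    (hsmooth : ∀ i j, ContDiff ℝ (⊤ : ℕ∞) fun t => γ t i j)
    (hortho : ∀ t, (γ t)ᵀ * γ t = 1) (t : ℝ) :
    ((γ t)ᵀ * gderiv γ t)ᵀ = -((γ t)ᵀ * gderiv γ t) := by
  ext i j
  have hD : ∀ a b, HasDerivAt (fun s => γ s a b) (gderiv γ t a b) t := fun a b =>
    (((hsmooth a b).differentiable (by simp)) t).hasDerivAt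
  have h1 : HasDerivAt (fun s => ((γ s)ᵀ * γ s) i j)
      (∑ k, (gderiv γ t k i * γ t k j + γ t k i * gderiv γ t k j)) t := by
    have : ∀ s, ((γ s)ᵀ * γ s) i j = ∑ k, γ s k i * γ s k j := by
      intro s; simp [Matrix.mul_apply, Matrix.transpose_apply]
    simp only [this]
    exact HasDerivAt.fun_sum fun k _ => (hD k i).mul (hD k j)
  have h2 : HasDerivAt (fun s => ((γ s)ᵀ * γ s) i j) 0 t := by
    have : (fun s => ((γ s)ᵀ * γ s) i j) = fun _ => (1 : Matrix (Fin n) (Fin n) ℝ) i j := by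
      funext s; rw [hortho s]
    rw [this]; exact hasDerivAt_const _ _
  have h0 := h1.unique h2
  have : ((γ t)ᵀ * gderiv γ t) i j + ((γ t)ᵀ * gderiv γ t) j i = 0 := by
    simp only [Matrix.mul_apply, Matrix.transpose_apply]
    rw [← h0, ← Finset.sum_add_distrib]
    exact Finset.sum_congr rfl fun k _ => by ring
  simp only [Matrix.transpose_apply, Matrix.neg_apply]
  linarith [this]

theorem dot_skew_zero {S : Matrix (Fin n) (Fin n) ℝ} (hS : Sᵀ = -S) (v : Fin n → ℝ) :
    v ⬝ᵥ (S *ᵥ v) = 0 := by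
  have h1 : v ⬝ᵥ (Sᵀ *ᵥ v) = v ⬝ᵥ (S *ᵥ v) := by
    rw [Matrix.dotProduct_mulVec, Matrix.vecMul_transpose, dotProduct_comm,
      Matrix.dotProduct_mulVec]
  rw [hS, Matrix.neg_mulVec, dotProduct_neg] at h1
  linarith

theorem det_gamma_sq (γ : ℝ → Matrix (Fin n) (Fin n) ℝ)
    (hortho : ∀ t, (γ t)ᵀ * γ t = 1) (t : ℝ) : |(γ t).det| = 1 := by
  have h := congrArg Matrix.det (hortho t)
  rw [Matrix.det_mul, Matrix.det_transpose, Matrix.det_one] at h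
  rcases mul_self_eq_one_iff.mp h with h' | h' <;> rw [h'] <;> norm_num

theorem mul_vecMulVec (M : Matrix (Fin n) (Fin n) ℝ) (u w : Fin n → ℝ) :
    M * vecMulVec u w = vecMulVec (M *ᵥ u) w := by
  ext i j
  simp only [Matrix.mul_apply, vecMulVec_apply, Matrix.mulVec, dotProduct]
  conv_rhs => rw [Finset.sum_mul]
  exact Finset.sum_congr rfl fun x _ => by ring

theorem abs_det_Dmat (γ : ℝ → Matrix (Fin n) (Fin n) ℝ)
    (hsmooth : ∀ i j, ContDiff ℝ (⊤ : ℕ∞) fun t => γ t i j)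
    (hortho : ∀ t, (γ t)ᵀ * γ t = 1) (v : Fin n → ℝ) :
    |(Dmat γ v).det| = 1 := by
  set t := v ⬝ᵥ v with ht
  have hγγ : γ t * (γ t)ᵀ = 1 := mul_eq_one_comm.mp (hortho t)
  set u : Fin n → ℝ := (2:ℝ) • ((γ t)ᵀ *ᵥ (gderiv γ t *ᵥ v)) with hu
  have hfact : Dmat γ v = γ t * (1 + vecMulVec u v) := by
    rw [Matrix.mul_add, Matrix.mul_one, mul_vecMulVec]
    rw [show γ t *ᵥ u = (2:ℝ) • (gderiv γ t *ᵥ v) by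
      rw [hu, Matrix.mulVec_smul, Matrix.mulVec_mulVec, Matrix.mulVec_mulVec,
        hγγ, Matrix.one_mul]]
    rfl
  have hdot : v ⬝ᵥ u = 0 := by
    rw [hu, Matrix.mulVec_mulVec, dotProduct_smul,
      dot_skew_zero (skew γ hsmooth hortho t) v, smul_zero]
  rw [hfact, Matrix.det_mul, vecMulVec_eq Unit, Matrix.det_one_add_replicateCol_mul_replicateRow, hdot]
  rw [add_zero, mul_one]
  exact det_gamma_sq γ hortho t

theorem Fmap_dot (γ : ℝ → Matrix (Fin n) (Fin n) ℝ)
    (hortho : ∀ t, (γ t)ᵀ * γ t = 1) (v : Fin n → ℝ) :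
    Fmap γ v ⬝ᵥ Fmap γ v = v ⬝ᵥ v := by
  rw [Fmap, Matrix.dotProduct_mulVec, ← Matrix.mulVec_transpose, Matrix.mulVec_mulVec,
    hortho, Matrix.one_mulVec]

theorem Fmap_inj (γ : ℝ → Matrix (Fin n) (Fin n) ℝ)
    (hortho : ∀ t, (γ t)ᵀ * γ t = 1) : Function.Injective (Fmap γ) := by
  intro a b hab
  have hdot : a ⬝ᵥ a = b ⬝ᵥ b := by
    rw [← Fmap_dot γ hortho a, ← Fmap_dot γ hortho b, hab]
  have h1 : γ (a ⬝ᵥ a) *ᵥ a = γ (a ⬝ᵥ a) *ᵥ b := by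
    have := hab
    rw [Fmap, Fmap, ← hdot] at this
    exact this
  have h2 := congrArg (fun w => (γ (a ⬝ᵥ a))ᵀ *ᵥ w) h1
  simpa [Matrix.mulVec_mulVec, hortho, Matrix.one_mulVec] using h2

theorem Fmap_surj (γ : ℝ → Matrix (Fin n) (Fin n) ℝ)
    (hortho : ∀ t, (γ t)ᵀ * γ t = 1) : Function.Surjective (Fmap γ) := by
  intro w
  have hγγ : γ (w ⬝ᵥ w) * (γ (w ⬝ᵥ w))ᵀ = 1 := mul_eq_one_comm.mp (hortho _)
  refine ⟨(γ (w ⬝ᵥ w))ᵀ *ᵥ w, ?_⟩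
  have hdot : ((γ (w ⬝ᵥ w))ᵀ *ᵥ w) ⬝ᵥ ((γ (w ⬝ᵥ w))ᵀ *ᵥ w) = w ⬝ᵥ w := by
    rw [Matrix.dotProduct_mulVec, ← Matrix.mulVec_transpose, Matrix.mulVec_mulVec,
      Matrix.transpose_transpose, hγγ, Matrix.one_mulVec]
  rw [Fmap, hdot, Matrix.mulVec_mulVec, hγγ, Matrix.one_mulVec]

theorem norm_sq_eq_dot (x : EuclideanSpace ℝ (Fin n)) :
    ‖x‖ ^ 2 = (EuclideanSpace.equiv (Fin n) ℝ x) ⬝ᵥ (EuclideanSpace.equiv (Fin n) ℝ x) := by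
  rw [EuclideanSpace.norm_eq, Real.sq_sqrt (by positivity)]
  exact Finset.sum_congr rfl fun i _ => by
    rw [Real.norm_eq_abs, sq_abs, sq]; rfl

theorem spiral_eq_Fmap (γ : ℝ → Matrix (Fin n) (Fin n) ℝ) (x : EuclideanSpace ℝ (Fin n)) :
    spiral γ x = (EuclideanSpace.equiv (Fin n) ℝ).symm
      (Fmap γ (EuclideanSpace.equiv (Fin n) ℝ x)) := by
  rw [spiral, Fmap, norm_sq_eq_dot]

end Aux

/-- If `P` is a probability measure on `ℝⁿ` with a smooth density `p` (with respect to
Lebesgue measure) of the form `p(x) = u(‖x‖²)`, then every spiral preserves `P`,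
i.e. `f_#P = P`. -/
theorem spiral_preserves_radial_measure {n : ℕ} (γ : ℝ → Matrix (Fin n) (Fin n) ℝ)
    (hsmooth : ∀ i j, ContDiff ℝ (⊤ : ℕ∞) fun t => γ t i j)
    (hortho : ∀ t, (γ t)ᵀ * γ t = 1)
    (P : Measure (EuclideanSpace ℝ (Fin n))) [IsProbabilityMeasure P]
    (p : EuclideanSpace ℝ (Fin n) → ℝ) (hp : ContDiff ℝ (⊤ : ℕ∞) p)
    (hP : P = volume.withDensity fun x => ENNReal.ofReal (p x))
    (u : ℝ → ℝ) (hu : ContDiff ℝ (⊤ : ℕ∞) u)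
    (hfactor : ∀ x, p x = u (‖x‖ ^ 2)) :
    P.map (spiral γ) = P := by
  classical
  set e := EuclideanSpace.equiv (Fin n) ℝ with he
  set f := spiral γ with hf
  set f' : EuclideanSpace ℝ (Fin n) → (EuclideanSpace ℝ (Fin n) →L[ℝ] EuclideanSpace ℝ (Fin n)) :=
    fun x => ((e.symm : (Fin n → ℝ) →L[ℝ] EuclideanSpace ℝ (Fin n)).comp
      ((LinearMap.toContinuousLinearMap (Matrix.toLin' (Dmat γ (e x)))).comp
        (e : EuclideanSpace ℝ (Fin n) →L[ℝ] (Fin n → ℝ)))) with hf'def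
  have hfeq : f = fun x => e.symm (Fmap γ (e x)) := funext fun x => spiral_eq_Fmap γ x
  have hf' : ∀ x, HasFDerivAt f (f' x) x := by
    intro x
    have h1 := hasFDerivAt_Fmap γ hsmooth (e x)
    have h2 := h1.comp x e.hasFDerivAt
    have h3 := e.symm.hasFDerivAt.comp x h2
    rw [hfeq]
    exact h3
  have hdet : ∀ x, |(f' x).det| = 1 := by
    intro x
    have hconj : ((f' x : EuclideanSpace ℝ (Fin n) →ₗ[ℝ] EuclideanSpace ℝ (Fin n))) =
        (e.symm.toLinearEquiv : (Fin n → ℝ) →ₗ[ℝ] EuclideanSpace ℝ (Fin n)) ∘ₗ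
          (Matrix.toLin' (Dmat γ (e x))) ∘ₗ
            (e.symm.toLinearEquiv.symm : EuclideanSpace ℝ (Fin n) →ₗ[ℝ] (Fin n → ℝ)) := rfl
    rw [ContinuousLinearMap.det, hconj, LinearMap.det_conj, LinearMap.det_toLin']
    exact abs_det_Dmat γ hsmooth hortho (e x)
  have hinj : Function.Injective f := by
    rw [hfeq]
    exact e.symm.injective.comp ((Fmap_inj γ hortho).comp e.injective)
  have hsurj : Function.Surjective f := by
    rw [hfeq]
    exact e.symm.surjective.comp ((Fmap_surj γ hortho).comp e.surjective)
  have hcont : Continuous f := by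
    rw [continuous_iff_continuousAt]
    exact fun x => (hf' x).differentiableAt.continuousAt
  have hpf : ∀ x, p (f x) = p x := by
    intro x
    rw [hfactor, hfactor]
    congr 1
    rw [norm_sq_eq_dot, norm_sq_eq_dot]
    have : e (f x) = Fmap γ (e x) := by rw [hfeq]; simp
    rw [this, Fmap_dot γ hortho]
  refine Measure.ext fun A hA => ?_
  rw [Measure.map_apply hcont.measurable hA, hP]
  have hsA : MeasurableSet (f ⁻¹' A) := hcont.measurable hA
  rw [withDensity_apply _ hsA, withDensity_apply _ hA]
  have himg : f '' (f ⁻¹' A) = A := Set.image_preimage_eq A hsurj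
  have hcv := lintegral_image_eq_lintegral_abs_det_fderiv_mul volume hsA
    (fun x _ => (hf' x).hasFDerivWithinAt) (hinj.injOn)
    (fun x => ENNReal.ofReal (p x))
  rw [himg] at hcv
  rw [hcv]
  refine setLIntegral_congr_fun hsA (fun x _ => ?_)
  rw [hdet, hpf, ENNReal.ofReal_one, one_mul]
end

section
/- Let σ > 0 and let P be the centered isotropic Gaussian measure N(0, σ²Iₙ) on ℝⁿ, i.e., the measure with density x ↦ (2πσ²)^{-n/2} exp(−‖x‖²/(2σ²)) with respect to Lebesgue measure. Then for every spiral f : ℝⁿ → ℝⁿ one has f_#P = P; equivalently, if X ∼ N(0, σ²Iₙ) then f(X) ∼ N(0, σ²Iₙ). -/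
open Matrix MeasureTheory Real
open scoped ENNReal

namespace SpiralAux

variable {n : ℕ}

/-- The squared Euclidean norm as a function on plain vectors. -/
noncomputable def Qs (y : Fin n → ℝ) : ℝ := ∑ i, y i ^ 2

/-- Entrywise derivative of a matrix path. -/
noncomputable def gd (γ : ℝ → Matrix (Fin n) (Fin n) ℝ) (t : ℝ) : Matrix (Fin n) (Fin n) ℝ :=
  fun i j => deriv (fun s => γ s i j) t

/-- The Jacobian matrix of the spiral map, expressed on plain vectors. -/
noncomputable def Mmat (γ : ℝ → Matrix (Fin n) (Fin n) ℝ) (y : Fin n → ℝ) :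
    Matrix (Fin n) (Fin n) ℝ :=
  γ (Qs y) + replicateCol Unit ((2:ℝ) • (gd γ (Qs y) *ᵥ y)) * replicateRow Unit y

lemma norm_sq_eq (x : EuclideanSpace ℝ (Fin n)) : ‖x‖ ^ 2 = Qs (fun i => x i) := by
  rw [EuclideanSpace.norm_eq, sq_sqrt (by positivity)]
  simp [Qs, Real.norm_eq_abs, sq_abs]

lemma Qs_eq_dot (y : Fin n → ℝ) : Qs y = y ⬝ᵥ y := by
  simp [Qs, dotProduct, sq]

lemma dot_transpose (A : Matrix (Fin n) (Fin n) ℝ) (y : Fin n → ℝ) :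
    y ⬝ᵥ (Aᵀ *ᵥ y) = y ⬝ᵥ (A *ᵥ y) := by
  simp only [dotProduct, mulVec, transpose_apply, Finset.mul_sum]
  rw [Finset.sum_comm]
  exact Finset.sum_congr rfl fun i _ => Finset.sum_congr rfl fun j _ => by ring

lemma entry_hasDerivAt (γ : ℝ → Matrix (Fin n) (Fin n) ℝ)
    (hsmooth : ∀ i j, ContDiff ℝ (⊤ : ℕ∞) fun t => γ t i j) (t : ℝ) (i j : Fin n) :
    HasDerivAt (fun s => γ s i j) (gd γ t i j) t :=
  ((hsmooth i j).differentiable (by simp) t).hasDerivAt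

lemma antisym (γ : ℝ → Matrix (Fin n) (Fin n) ℝ)
    (hsmooth : ∀ i j, ContDiff ℝ (⊤ : ℕ∞) fun t => γ t i j)
    (hortho : ∀ t, (γ t)ᵀ * γ t = 1) (t : ℝ) :
    (gd γ t)ᵀ * γ t + (γ t)ᵀ * gd γ t = 0 := by
  ext i j
  have h1 : HasDerivAt (fun s => ∑ k, γ s k i * γ s k j)
      (∑ k, (gd γ t k i * γ t k j + γ t k i * gd γ t k j)) t :=
    HasDerivAt.fun_sum fun k _ =>
      (entry_hasDerivAt γ hsmooth t k i).mul (entry_hasDerivAt γ hsmooth t k j)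
  have h2 : (fun s => ∑ k, γ s k i * γ s k j) = fun _ => (1 : Matrix (Fin n) (Fin n) ℝ) i j := by
    funext s
    have := congrArg (fun M => M i j) (hortho s)
    simpa [Matrix.mul_apply] using this
  have h3 : HasDerivAt (fun s => ∑ k, γ s k i * γ s k j) 0 t := by
    rw [h2]; exact hasDerivAt_const _ _
  have h4 := h1.unique h3
  simpa [Matrix.add_apply, Matrix.mul_apply, Matrix.zero_apply, transpose_apply,
    Finset.sum_add_distrib] using h4

lemma quad_zero (γ : ℝ → Matrix (Fin n) (Fin n) ℝ)
    (hsmooth : ∀ i j, ContDiff ℝ (⊤ : ℕ∞) fun t => γ t i j)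
    (hortho : ∀ t, (γ t)ᵀ * γ t = 1) (t : ℝ) (y : Fin n → ℝ) :
    y ⬝ᵥ (((γ t)ᵀ * gd γ t) *ᵥ y) = 0 := by
  have h := antisym γ hsmooth hortho t
  have h2 : ((γ t)ᵀ * gd γ t)ᵀ = -((γ t)ᵀ * gd γ t) := by
    have : (gd γ t)ᵀ * γ t = -((γ t)ᵀ * gd γ t) := by linear_combination (norm := noncomm_ring) h
    rw [transpose_mul, transpose_transpose, this]
  have h3 := dot_transpose ((γ t)ᵀ * gd γ t) y
  rw [h2] at h3
  simp only [neg_mulVec, dotProduct_neg] at h3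
  linarith

lemma mul_col_eq (A : Matrix (Fin n) (Fin n) ℝ) (u : Fin n → ℝ) :
    A * replicateCol Unit u = replicateCol Unit (A *ᵥ u) := by
  ext i j
  simp [Matrix.mul_apply, Matrix.mulVec, Matrix.replicateCol_apply, dotProduct]

lemma det_M (γ : ℝ → Matrix (Fin n) (Fin n) ℝ)
    (hsmooth : ∀ i j, ContDiff ℝ (⊤ : ℕ∞) fun t => γ t i j)
    (hortho : ∀ t, (γ t)ᵀ * γ t = 1) (t : ℝ) (y : Fin n → ℝ) :
    (γ t + replicateCol Unit ((2:ℝ) • (gd γ t *ᵥ y)) * replicateRow Unit y).det = (γ t).det := by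
  have hR : γ t * (γ t)ᵀ = 1 := mul_eq_one_comm.mp (hortho t)
  set u := (2:ℝ) • (gd γ t *ᵥ y) with hu
  have key : γ t + replicateCol Unit u * replicateRow Unit y
      = γ t * (1 + replicateCol Unit ((γ t)ᵀ *ᵥ u) * replicateRow Unit y) := by
    rw [mul_add, mul_one, ← Matrix.mul_assoc, mul_col_eq, mulVec_mulVec, hR, one_mulVec]
  rw [key, det_mul, det_one_add_replicateCol_mul_replicateRow]
  have : y ⬝ᵥ ((γ t)ᵀ *ᵥ u) = 0 := by
    rw [hu, mulVec_smul, dotProduct_smul, mulVec_mulVec, quad_zero γ hsmooth hortho t y,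
      smul_zero]
  rw [this]; ring

lemma abs_det_one (γ : ℝ → Matrix (Fin n) (Fin n) ℝ)
    (hortho : ∀ t, (γ t)ᵀ * γ t = 1) (t : ℝ) : |(γ t).det| = 1 := by
  have : (γ t).det * (γ t).det = 1 := by
    have := congrArg Matrix.det (hortho t)
    rwa [det_mul, det_transpose, det_one] at this
  rcases mul_self_eq_one_iff.mp this with h | h <;> rw [h] <;> norm_num

/-- The differential of the squared norm. -/
noncomputable def LQ (y : Fin n → ℝ) : (Fin n → ℝ) →L[ℝ] ℝ :=
  ∑ j, (2 * y j) • ContinuousLinearMap.proj j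

lemma hQ (y : Fin n → ℝ) : HasFDerivAt Qs (LQ y) y := by
  unfold Qs LQ
  apply HasFDerivAt.fun_sum
  intro j _
  have h := (hasFDerivAt_apply (𝕜 := ℝ) j y).fun_mul (hasFDerivAt_apply (𝕜 := ℝ) j y)
  simpa [sq, two_mul, add_smul] using h

lemma hF (γ : ℝ → Matrix (Fin n) (Fin n) ℝ)
    (hsmooth : ∀ i j, ContDiff ℝ (⊤ : ℕ∞) fun t => γ t i j) (y : Fin n → ℝ) :
    HasFDerivAt (fun z => γ (Qs z) *ᵥ z)
      (LinearMap.toContinuousLinearMap (Matrix.toLin' (Mmat γ y))) y := by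
  rw [hasFDerivAt_pi']
  intro i
  have hcomp : ∀ j : Fin n, HasFDerivAt (fun z : Fin n → ℝ => γ (Qs z) i j)
      ((gd γ (Qs y) i j) • LQ y) y := fun j =>
    (entry_hasDerivAt γ hsmooth (Qs y) i j).comp_hasFDerivAt y (hQ y)
  have hsum : HasFDerivAt (fun z : Fin n → ℝ => ∑ j, γ (Qs z) i j * z j)
      (∑ j, (γ (Qs y) i j • ContinuousLinearMap.proj j
        + y j • (gd γ (Qs y) i j • LQ y))) y := by
    apply HasFDerivAt.fun_sum
    intro j _
    exact (hcomp j).mul (hasFDerivAt_apply j y)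
  have hfun : (fun z : Fin n → ℝ => (γ (Qs z) *ᵥ z) i)
      = fun z => ∑ j, γ (Qs z) i j * z j := by
    funext z; simp [Matrix.mulVec, dotProduct]
  rw [hfun]
  refine hsum.congr_fderiv (Eq.symm ?_)
  ext h
  simp only [ContinuousLinearMap.comp_apply, ContinuousLinearMap.coe_sum', Finset.sum_apply,
    ContinuousLinearMap.add_apply, ContinuousLinearMap.smul_apply, ContinuousLinearMap.proj_apply,
    LinearMap.coe_toContinuousLinearMap', Matrix.toLin'_apply, LQ, smul_eq_mul,
    Mmat, Matrix.mulVec, dotProduct, Matrix.add_apply, Matrix.mul_apply, Matrix.replicateCol_apply,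
    Matrix.replicateRow_apply, Pi.smul_apply, Finset.sum_singleton, Fintype.sum_unique]
  simp only [add_mul, Finset.sum_add_distrib]
  congr 1
  simp only [Finset.mul_sum, Finset.sum_mul, mul_assoc]
  rw [Finset.sum_comm]
  exact Finset.sum_congr rfl fun _ _ => Finset.sum_congr rfl fun _ _ => by ring

/-- The full derivative of the spiral map. -/
noncomputable def fd (γ : ℝ → Matrix (Fin n) (Fin n) ℝ) (x : EuclideanSpace ℝ (Fin n)) :
    EuclideanSpace ℝ (Fin n) →L[ℝ] EuclideanSpace ℝ (Fin n) :=
  ((EuclideanSpace.equiv (Fin n) ℝ).symm : (Fin n → ℝ) →L[ℝ] EuclideanSpace ℝ (Fin n)).comp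
    ((LinearMap.toContinuousLinearMap
        (Matrix.toLin' (Mmat γ (EuclideanSpace.equiv (Fin n) ℝ x)))).comp
      ((EuclideanSpace.equiv (Fin n) ℝ) : EuclideanSpace ℝ (Fin n) →L[ℝ] (Fin n → ℝ)))

lemma spiral_hasFDerivAt (γ : ℝ → Matrix (Fin n) (Fin n) ℝ)
    (hsmooth : ∀ i j, ContDiff ℝ (⊤ : ℕ∞) fun t => γ t i j) (x : EuclideanSpace ℝ (Fin n)) :
    HasFDerivAt (spiral γ) (fd γ x) x := by
  have h0 : spiral γ = fun x : EuclideanSpace ℝ (Fin n) =>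
      (EuclideanSpace.equiv (Fin n) ℝ).symm
        ((fun z => γ (Qs z) *ᵥ z) ((EuclideanSpace.equiv (Fin n) ℝ) x)) := by
    funext x
    unfold spiral
    rw [norm_sq_eq]
    rfl
  rw [h0]
  exact ((EuclideanSpace.equiv (Fin n) ℝ).symm.hasFDerivAt).comp x
    ((hF γ hsmooth _).comp x ((EuclideanSpace.equiv (Fin n) ℝ).hasFDerivAt))

lemma det_fd (γ : ℝ → Matrix (Fin n) (Fin n) ℝ) (x : EuclideanSpace ℝ (Fin n)) :
    (fd γ x).det = (Mmat γ (EuclideanSpace.equiv (Fin n) ℝ x)).det := by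
  have h := LinearMap.det_conj
    (Matrix.toLin' (Mmat γ (EuclideanSpace.equiv (Fin n) ℝ x)))
    (EuclideanSpace.equiv (Fin n) ℝ).symm.toLinearEquiv
  rw [← LinearMap.det_toLin' (Mmat γ (EuclideanSpace.equiv (Fin n) ℝ x)), ← h]
  rfl

lemma mulVec_dot_self (A : Matrix (Fin n) (Fin n) ℝ) (hA : Aᵀ * A = 1) (v : Fin n → ℝ) :
    (A *ᵥ v) ⬝ᵥ (A *ᵥ v) = v ⬝ᵥ v := by
  rw [dotProduct_mulVec, show A *ᵥ v = v ᵥ* Aᵀ from (Matrix.vecMul_transpose A v).symm,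
    vecMul_vecMul, hA, vecMul_one]

lemma spiral_norm (γ : ℝ → Matrix (Fin n) (Fin n) ℝ)
    (hortho : ∀ t, (γ t)ᵀ * γ t = 1) (x : EuclideanSpace ℝ (Fin n)) :
    ‖spiral γ x‖ = ‖x‖ := by
  have h : ‖spiral γ x‖ ^ 2 = ‖x‖ ^ 2 := by
    rw [norm_sq_eq, norm_sq_eq x, Qs_eq_dot, Qs_eq_dot]
    exact mulVec_dot_self _ (hortho _) _
  nlinarith [norm_nonneg (spiral γ x), norm_nonneg x]

lemma spiral_leftInv (γ : ℝ → Matrix (Fin n) (Fin n) ℝ)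
    (hortho : ∀ t, (γ t)ᵀ * γ t = 1) (x : EuclideanSpace ℝ (Fin n)) :
    spiral (fun t => (γ t)ᵀ) (spiral γ x) = x := by
  have hn := spiral_norm γ hortho x
  conv_lhs => rw [spiral]
  rw [hn, spiral]
  simp [PiLp.coe_continuousLinearEquiv, mulVec_mulVec, hortho, one_mulVec]

lemma spiral_rightInv (γ : ℝ → Matrix (Fin n) (Fin n) ℝ)
    (hortho : ∀ t, (γ t)ᵀ * γ t = 1) (y : EuclideanSpace ℝ (Fin n)) :
    spiral γ (spiral (fun t => (γ t)ᵀ) y) = y := by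
  have h2 : ∀ t, ((γ t)ᵀ)ᵀ * (γ t)ᵀ = 1 := fun t => by
    rw [transpose_transpose]; exact mul_eq_one_comm.mp (hortho t)
  have := spiral_leftInv (fun t => (γ t)ᵀ) h2 y
  simpa [transpose_transpose] using this

end SpiralAux

open SpiralAux in
/-- Every spiral preserves the centered isotropic Gaussian measure `N(0, σ²Iₙ)`,
given by its density `x ↦ (2πσ²)^(-n/2) exp(−‖x‖²/(2σ²))` with respect to Lebesgue
measure: `f_#P = P`, i.e. if `X ∼ N(0, σ²Iₙ)` then `f(X) ∼ N(0, σ²Iₙ)`. -/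
theorem spiral_preserves_isotropic_gaussian {n : ℕ} (γ : ℝ → Matrix (Fin n) (Fin n) ℝ)
    (hsmooth : ∀ i j, ContDiff ℝ (⊤ : ℕ∞) fun t => γ t i j)
    (hortho : ∀ t, (γ t)ᵀ * γ t = 1)
    (σ : ℝ) (hσ : 0 < σ)
    (P : Measure (EuclideanSpace ℝ (Fin n)))
    (hP : P = volume.withDensity fun x =>
      ENNReal.ofReal ((2 * π * σ ^ 2) ^ (-(n : ℝ) / 2) * Real.exp (-‖x‖ ^ 2 / (2 * σ ^ 2)))) :
    P.map (spiral γ) = P := by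
  have hder : ∀ x, HasFDerivAt (spiral γ) (fd γ x) x := spiral_hasFDerivAt γ hsmooth
  have hdiff : Differentiable ℝ (spiral γ) := fun x => (hder x).differentiableAt
  have hmeas : Measurable (spiral γ) := hdiff.continuous.measurable
  have hinj : Function.Injective (spiral γ) :=
    Function.LeftInverse.injective (g := spiral fun t => (γ t)ᵀ) (spiral_leftInv γ hortho)
  have hsurj : Function.Surjective (spiral γ) := fun y =>
    ⟨spiral (fun t => (γ t)ᵀ) y, spiral_rightInv γ hortho y⟩
  have hdet1 : ∀ x, ENNReal.ofReal |(fd γ x).det| = 1 := by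
    intro x
    rw [det_fd, show (Mmat γ (EuclideanSpace.equiv (Fin n) ℝ x)).det
        = (γ (Qs (EuclideanSpace.equiv (Fin n) ℝ x))).det from
      det_M γ hsmooth hortho _ _, abs_det_one γ hortho]
    simp
  have hvol : Measure.map (spiral γ) (volume : Measure (EuclideanSpace ℝ (Fin n))) = volume := by
    have h := map_withDensity_abs_det_fderiv_eq_addHaar volume MeasurableSet.univ.nullMeasurableSet
      (fun x _ => (hder x).hasFDerivWithinAt) hinj.injOn
    rw [Set.image_univ, hsurj.range_eq, Measure.restrict_univ] at h
    rw [show (fun x => ENNReal.ofReal |(fd γ x).det|)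
        = (1 : EuclideanSpace ℝ (Fin n) → ℝ≥0∞) from funext hdet1, withDensity_one] at h
    exact h
  rw [hP]
  set ρ : EuclideanSpace ℝ (Fin n) → ℝ≥0∞ := fun x =>
    ENNReal.ofReal ((2 * π * σ ^ 2) ^ (-(n : ℝ) / 2) * Real.exp (-‖x‖ ^ 2 / (2 * σ ^ 2))) with hρ
  have hρcont : Continuous ρ := by
    apply ENNReal.continuous_ofReal.comp
    fun_prop
  have hρmeas : Measurable ρ := hρcont.measurable
  have hρf : ∀ x, ρ (spiral γ x) = ρ x := by
    intro x
    simp only [hρ, spiral_norm γ hortho]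
  ext s hs
  rw [Measure.map_apply hmeas hs, withDensity_apply _ (hmeas hs), withDensity_apply _ hs,
    ← lintegral_indicator (hmeas hs) ρ, ← lintegral_indicator hs ρ]
  have hind : ∀ x, ((spiral γ) ⁻¹' s).indicator ρ x = s.indicator ρ (spiral γ x) := by
    intro x
    rw [← Set.indicator_comp_right (s := s) (g := ρ) (spiral γ) (x := x),
      show ρ ∘ spiral γ = ρ from funext hρf]
  calc ∫⁻ x, (spiral γ ⁻¹' s).indicator ρ x ∂volume
      = ∫⁻ x, s.indicator ρ (spiral γ x) ∂volume := by simp_rw [hind]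
    _ = ∫⁻ x, s.indicator ρ x ∂(Measure.map (spiral γ) volume) :=
        (lintegral_map (hρmeas.indicator hs) hmeas).symm
    _ = ∫⁻ x, s.indicator ρ x ∂volume := by rw [hvol]
end

section
/- Let γ : ℝ → O(n) be smooth and f(x) = γ(‖x‖²) x the associated spiral. Then the Jacobian determinant of f has absolute value one at every point: |det f'(x)| = 1 for all x ∈ ℝⁿ. -/
open Matrix

/-- The Jacobian determinant of a spiral has absolute value one at every point:
`|det f'(x)| = 1` for all `x ∈ ℝⁿ`. -/
theorem spiral_abs_det_fderiv_eq_one {n : ℕ} (γ : ℝ → Matrix (Fin n) (Fin n) ℝ)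
    (hsmooth : ∀ i j, ContDiff ℝ (⊤ : ℕ∞) fun t => γ t i j)
    (hortho : ∀ t, (γ t)ᵀ * γ t = 1)
    (x : EuclideanSpace ℝ (Fin n)) :
    |LinearMap.det
        (fderiv ℝ (spiral γ) x :
          EuclideanSpace ℝ (Fin n) →ₗ[ℝ] EuclideanSpace ℝ (Fin n))| = 1 := by
  classical
  set e : EuclideanSpace ℝ (Fin n) ≃L[ℝ] (Fin n → ℝ) := EuclideanSpace.equiv (Fin n) ℝ with he
  set r : ℝ := ‖x‖ ^ 2 with hr
  set γ' : Matrix (Fin n) (Fin n) ℝ :=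
    Matrix.of fun i j => deriv (fun s => γ s i j) r with hγ'
  have hd : ∀ (i j : Fin n) (t : ℝ),
      HasDerivAt (fun s => γ s i j) (deriv (fun s => γ s i j) t) t :=
    fun i j t => (((hsmooth i j).differentiable (by simp)) t).hasDerivAt
  set y : Fin n → ℝ := e x with hy
  set u : Fin n → ℝ := γ' *ᵥ y with hu
  set M : Matrix (Fin n) (Fin n) ℝ := γ r + (2 : ℝ) • vecMulVec u y with hM
  have hq : HasFDerivAt (fun z : EuclideanSpace ℝ (Fin n) => ‖z‖ ^ 2) (2 • (innerSL ℝ x)) x :=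
    (hasStrictFDerivAt_norm_sq x).hasFDerivAt
  set D : Fin n → (EuclideanSpace ℝ (Fin n) →L[ℝ] ℝ) := fun j =>
    ∑ k, (γ r j k • (EuclideanSpace.proj k : EuclideanSpace ℝ (Fin n) →L[ℝ] ℝ)
      + y k • (γ' j k • (2 • (innerSL ℝ x)))) with hD
  have hcomp : ∀ j, HasFDerivAt
      (fun z : EuclideanSpace ℝ (Fin n) => ∑ k, γ (‖z‖ ^ 2) j k * z k) (D j) x := by
    intro j
    apply HasFDerivAt.fun_sum
    intro k _
    have h1 : HasFDerivAt (fun z : EuclideanSpace ℝ (Fin n) => γ (‖z‖ ^ 2) j k)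
        (γ' j k • (2 • (innerSL ℝ x))) x :=
      by have := (hd j k r).comp_hasFDerivAt x hq; exact this
    have h2 : HasFDerivAt (𝕜 := ℝ) (fun z : EuclideanSpace ℝ (Fin n) => (z k : ℝ))
        (EuclideanSpace.proj k) x :=
      ContinuousLinearMap.hasFDerivAt (𝕜 := ℝ) (E := EuclideanSpace ℝ (Fin n)) (F := ℝ)
        (EuclideanSpace.proj k)
    have := h1.mul h2
    exact this
  have hΦ : HasFDerivAt (fun (z : EuclideanSpace ℝ (Fin n)) (j : Fin n) =>
      ∑ k, γ (‖z‖ ^ 2) j k * z k) (ContinuousLinearMap.pi D) x := hasFDerivAt_pi.2 hcomp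
  set T : EuclideanSpace ℝ (Fin n) →L[ℝ] EuclideanSpace ℝ (Fin n) :=
    (e.symm : (Fin n → ℝ) →L[ℝ] EuclideanSpace ℝ (Fin n)).comp (ContinuousLinearMap.pi D) with hT
  have hspiral : HasFDerivAt (spiral γ) T x := by
    have h := (e.symm.hasFDerivAt (x := (fun (j : Fin n) => ∑ k, γ (‖x‖ ^ 2) j k * x k))).comp x hΦ
    have hfun : (fun z : EuclideanSpace ℝ (Fin n) =>
        e.symm (fun j => ∑ k, γ (‖z‖ ^ 2) j k * z k)) = spiral γ := by
      funext z
      show e.symm _ = e.symm _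
      congr 1
    rw [← hfun]
    exact h
  rw [hspiral.fderiv]
  set ε : (Fin n → ℝ) ≃ₗ[ℝ] EuclideanSpace ℝ (Fin n) := e.symm.toLinearEquiv with hε
  have hTlin : (T : EuclideanSpace ℝ (Fin n) →ₗ[ℝ] EuclideanSpace ℝ (Fin n))
      = (ε : (Fin n → ℝ) →ₗ[ℝ] EuclideanSpace ℝ (Fin n)) ∘ₗ (Matrix.mulVecLin M)
        ∘ₗ (ε.symm : EuclideanSpace ℝ (Fin n) →ₗ[ℝ] (Fin n → ℝ)) := by
    apply LinearMap.ext
    intro v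
    show e.symm (fun j => (D j) v) = e.symm (M *ᵥ (e v))
    congr 1
    funext j
    have hinner : (inner ℝ x v : ℝ) = ∑ i, x i * v i := by
      simp [PiLp.inner_apply, RCLike.inner_apply]
      exact Finset.sum_congr rfl (fun i _ => mul_comm _ _)
    show (D j) v = (M *ᵥ (e v)) j
    have hlhs : (D j) v
        = ∑ k, (γ r j k * v k + y k * (γ' j k * (2 * (inner ℝ x v : ℝ)))) := by
      rw [hD]
      simp [ContinuousLinearMap.sum_apply, smul_eq_mul, mul_assoc, two_smul, two_mul]
      ring_nf
      apply Finset.sum_congr rfl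
      intro k _
      ring
    have hrhs : (M *ᵥ (e v)) j
        = ∑ k, ((γ r j k + 2 * (u j * y k)) * v k) := by
      rw [hM]
      simp [Matrix.mulVec, dotProduct, Matrix.add_apply, Matrix.smul_apply, vecMulVec_apply,
        smul_eq_mul]
      apply Finset.sum_congr rfl
      intro k _
      rfl
    rw [hlhs, hrhs, hinner]
    have hsum : ∑ k, y k * (γ' j k * (2 * ∑ i, x i * v i))
        = 2 * (u j * ∑ k, y k * v k) := by
      rw [Finset.sum_congr rfl (fun k _ => by ring : ∀ k ∈ Finset.univ,
        y k * (γ' j k * (2 * ∑ i, x i * v i)) = (γ' j k * y k) * (2 * ∑ i, x i * v i))]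
      rw [← Finset.sum_mul]
      have h1 : ∑ k, γ' j k * y k = u j := rfl
      have h2 : ∑ i, x i * v i = ∑ k, y k * v k := rfl
      rw [h1, h2]; ring
    rw [Finset.sum_add_distrib, hsum]
    rw [Finset.sum_congr rfl (fun k _ => by ring : ∀ k ∈ Finset.univ,
      (γ r j k + 2 * (u j * y k)) * v k = γ r j k * v k + 2 * (u j * (y k * v k)))]
    rw [Finset.sum_add_distrib]
    congr 1
    rw [← Finset.mul_sum, ← Finset.mul_sum]
  rw [hTlin, LinearMap.det_conj, ← Matrix.toLin'_apply', LinearMap.det_toLin']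
  -- matrix algebra
  have hinv : γ r * (γ r)ᵀ = 1 := mul_eq_one_comm.mp (hortho r)
  set A : Matrix (Fin n) (Fin n) ℝ := (γ r)ᵀ * γ' with hA
  have key : ∀ i j : Fin n,
      ∑ k, (γ' k i * γ r k j + γ r k i * γ' k j) = 0 := by
    intro i j
    have h1 : HasDerivAt (fun t => ∑ k, γ t k i * γ t k j)
        (∑ k, (γ' k i * γ r k j + γ r k i * γ' k j)) r := by
      apply HasDerivAt.fun_sum
      intro k _
      exact (hd k i r).mul (hd k j r)
    have h2 : (fun t => ∑ k, γ t k i * γ t k j)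
        = fun _ => (1 : Matrix (Fin n) (Fin n) ℝ) i j := by
      funext t
      have h := congrFun (congrFun (hortho t) i) j
      rw [← h]
      simp [Matrix.mul_apply, Matrix.transpose_apply]
    rw [h2] at h1
    exact h1.unique (hasDerivAt_const _ _)
  have hanti : Aᵀ = -A := by
    ext i j
    have hk := key i j
    have h1 : (Aᵀ) i j = ∑ k, γ' k i * γ r k j := by
      simp [hA, Matrix.transpose_apply, Matrix.mul_apply, mul_comm]
    have h2 : A i j = ∑ k, γ r k i * γ' k j := by
      simp [hA, Matrix.transpose_apply, Matrix.mul_apply]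
    rw [Finset.sum_add_distrib] at hk
    rw [Matrix.neg_apply, h1, h2]
    linarith
  have hzero : y ⬝ᵥ (A *ᵥ y) = 0 := by
    have h1 : y ⬝ᵥ (A *ᵥ y) = (Aᵀ *ᵥ y) ⬝ᵥ y := by
      rw [Matrix.dotProduct_mulVec, Matrix.mulVec_transpose]
    have h2 : (Aᵀ *ᵥ y) ⬝ᵥ y = -(y ⬝ᵥ (A *ᵥ y)) := by
      rw [hanti, Matrix.neg_mulVec, neg_dotProduct, dotProduct_comm]
    have := h1.trans h2
    linarith
  have hMdet : M.det = (γ r).det := by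
    have hfac : M = γ r * (1 + vecMulVec ((2 : ℝ) • ((γ r)ᵀ *ᵥ u)) y) := by
      rw [Matrix.mul_add, Matrix.mul_one, hM]
      congr 1
      ext i j
      simp only [Matrix.mul_apply, vecMulVec_apply, Matrix.smul_apply, smul_eq_mul,
        Pi.smul_apply, Matrix.mulVec, dotProduct, Matrix.transpose_apply]
      symm
      have hGG : ∑ k, γ r i k * ∑ l, γ r l k * u l = u i := by
        have hswap : ∑ k, γ r i k * ∑ l, γ r l k * u l
            = ∑ l, (∑ k, γ r i k * γ r l k) * u l := by
          calc ∑ k, γ r i k * ∑ l, γ r l k * u l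
              = ∑ k, ∑ l, γ r i k * (γ r l k * u l) := by
                apply Finset.sum_congr rfl; intro k _; rw [Finset.mul_sum]
            _ = ∑ l, ∑ k, γ r i k * (γ r l k * u l) := Finset.sum_comm
            _ = ∑ l, (∑ k, γ r i k * γ r l k) * u l := by
                apply Finset.sum_congr rfl; intro l _
                rw [Finset.sum_mul]
                apply Finset.sum_congr rfl; intro k _; ring
        rw [hswap]
        have hone : ∀ l, ∑ k, γ r i k * γ r l k = (1 : Matrix (Fin n) (Fin n) ℝ) i l := by
          intro l
          have h := congrFun (congrFun hinv i) l
          rw [← h]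
          simp [Matrix.mul_apply, Matrix.transpose_apply]
        rw [Finset.sum_congr rfl (fun l _ => by rw [hone l])]
        simp [Matrix.one_apply]
      rw [Finset.sum_congr rfl (fun k _ => by ring : ∀ k ∈ Finset.univ,
        γ r i k * ((2 * ∑ l, γ r l k * u l) * y j)
          = (γ r i k * ∑ l, γ r l k * u l) * (2 * y j))]
      rw [← Finset.sum_mul, hGG]
      ring
    rw [hfac, Matrix.det_mul]
    have hdet1 : (1 + vecMulVec ((2 : ℝ) • ((γ r)ᵀ *ᵥ u)) y).det = 1 := by
      rw [vecMulVec_eq Unit, Matrix.det_one_add_replicateCol_mul_replicateRow]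
      have : y ⬝ᵥ ((2 : ℝ) • ((γ r)ᵀ *ᵥ u)) = 2 * (y ⬝ᵥ (A *ᵥ y)) := by
        rw [dotProduct_smul, hu, Matrix.mulVec_mulVec, ← hA]
        simp [smul_eq_mul]
      rw [this, hzero]
      ring
    rw [hdet1, mul_one]
  rw [hMdet]
  have hd1 : (γ r).det * (γ r).det = 1 := by
    have h := congrArg Matrix.det (hortho r)
    rwa [Matrix.det_mul, Matrix.det_transpose, Matrix.det_one] at h
  rcases mul_self_eq_one_iff.mp hd1 with h | h <;> rw [h] <;> norm_num
end
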